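/- Let A be a commutative ring, I ⊂ A an ideal, and let G_I^k denote the set of k-multilinear maps φ : A^k → A satisfying φ(f_1,…,f_{k-1},g) ∈ I whenever g ∈ I (and G_I^0 = I). Then G_I = ⊕_k G_I^k is closed under the Gerstenhaber bracket [φ,ψ]_G = φ∘_G ψ − (−1)^{(k−1)(l−1)} ψ∘_G φ, where φ∘_G ψ = Σ_{i=1}^k (−1)^{(i−1)(l−1)} φ∘_i ψ. -/
import Mathlib


section Gerstenhaber

variable {A : Type*} [CommRing A]

/-- Partial (Gerstenhaber) insertion `φ ∘_i ψ` of a `(m+1)`-multilinear map into the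
`i`-th slot (`0`-indexed) of a `(k+1)`-multilinear map. -/
def insComp {k m : ℕ}
    (φ : MultilinearMap ℤ (fun _ : Fin (k + 1) => A) A)
    (ψ : MultilinearMap ℤ (fun _ : Fin (m + 1) => A) A)
    (i : ℕ) (f : Fin (k + m + 1) → A) : A :=
  φ (fun j : Fin (k + 1) =>
    if (j : ℕ) < i then f ⟨j, by have := j.isLt; omega⟩
    else if (j : ℕ) = i then
      ψ (fun r : Fin (m + 1) =>
        f ⟨(j : ℕ) + (r : ℕ), by have := j.isLt; have := r.isLt; omega⟩)
    else f ⟨(j : ℕ) + m, by have := j.isLt; omega⟩)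

/-- The Gerstenhaber pre-sum `φ ∘_G ψ = Σ_{i=1}^{k} (-1)^{(i-1)(l-1)} φ ∘_i ψ`,
written here with `0`-indexed insertion positions. -/
def gerstComp {k m : ℕ}
    (φ : MultilinearMap ℤ (fun _ : Fin (k + 1) => A) A)
    (ψ : MultilinearMap ℤ (fun _ : Fin (m + 1) => A) A)
    (f : Fin (k + m + 1) → A) : A :=
  ∑ i ∈ Finset.range (k + 1), ((-1 : ℤ) ^ (i * m)) • insComp φ ψ i f

/-- The Gerstenhaber bracket `[φ,ψ]_G = φ∘_G ψ − (−1)^{(k−1)(l−1)} ψ∘_G φ`. -/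
def gerstBracket {k m : ℕ}
    (φ : MultilinearMap ℤ (fun _ : Fin (k + 1) => A) A)
    (ψ : MultilinearMap ℤ (fun _ : Fin (m + 1) => A) A)
    (f : Fin (k + m + 1) → A) : A :=
  gerstComp φ ψ f -
    ((-1 : ℤ) ^ (k * m)) • gerstComp ψ φ (fun j => f (Fin.cast (by omega) j))

private lemma insComp_mem {I : Ideal A} {k m : ℕ}
    {φ : MultilinearMap ℤ (fun _ : Fin (k + 1) => A) A}
    {ψ : MultilinearMap ℤ (fun _ : Fin (m + 1) => A) A}
    (hφ : ∀ g : Fin (k + 1) → A, g (Fin.last k) ∈ I → φ g ∈ I)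
    (hψ : ∀ g : Fin (m + 1) → A, g (Fin.last m) ∈ I → ψ g ∈ I)
    (i : ℕ) (hi : i ≤ k) (f : Fin (k + m + 1) → A)
    (hf : f (Fin.last (k + m)) ∈ I) : insComp φ ψ i f ∈ I := by
  unfold insComp
  apply hφ
  have hlast : ((Fin.last k : Fin (k+1)) : ℕ) = k := rfl
  by_cases h : k = i
  · simp only [hlast]
    rw [if_neg (by omega), if_pos h]
    apply hψ
    have : (⟨k + ((Fin.last m : Fin (m+1)) : ℕ), by omega⟩ : Fin (k+m+1)) =
        Fin.last (k + m) := by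
      ext; simp [Fin.last]
    rw [this]; exact hf
  · simp only [hlast]
    rw [if_neg (by omega), if_neg (by omega)]
    have : (⟨k + m, by omega⟩ : Fin (k+m+1)) = Fin.last (k + m) := rfl
    rw [this]; exact hf

/-- If `φ` and `ψ` are multilinear maps on a commutative ring `A` adapted to an
ideal `I` (sending tuples whose last entry lies in `I` into `I`), then so is their
Gerstenhaber bracket `[φ,ψ]_G`. -/
theorem gerstBracket_adapted (I : Ideal A) (k m : ℕ)
    (φ : MultilinearMap ℤ (fun _ : Fin (k + 1) => A) A)
    (ψ : MultilinearMap ℤ (fun _ : Fin (m + 1) => A) A)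
    (hφ : ∀ g : Fin (k + 1) → A, g (Fin.last k) ∈ I → φ g ∈ I)
    (hψ : ∀ g : Fin (m + 1) → A, g (Fin.last m) ∈ I → ψ g ∈ I) :
    ∀ f : Fin (k + m + 1) → A, f (Fin.last (k + m)) ∈ I →
      gerstBracket φ ψ f ∈ I := by
  intro f hf
  have h1 : gerstComp φ ψ f ∈ I := by
    unfold gerstComp
    refine Ideal.sum_mem _ fun i hi => zsmul_mem ?_ _
    exact insComp_mem hφ hψ i (by have := Finset.mem_range.mp hi; omega) f hf
  have h2 : gerstComp ψ φ (fun j => f (Fin.cast (by omega) j)) ∈ I := by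
    unfold gerstComp
    refine Ideal.sum_mem _ fun i hi => zsmul_mem ?_ _
    refine insComp_mem hψ hφ i (by have := Finset.mem_range.mp hi; omega) _ ?_
    have heq : (Fin.cast (by omega : m + k + 1 = k + m + 1) (Fin.last (m+k))) =
        Fin.last (k+m) := by ext; simp [Fin.last]; omega
    simpa [heq] using hf
  unfold gerstBracket
  exact Ideal.sub_mem _ h1 (zsmul_mem h2 _)

end Gerstenhaber
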